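/- There is a universal constant c > 0 such that for every integer k ≥ 2, every sufficiently large even m with m/2 ≥ k, and every λ that is a multiple of m/2, every deterministic ordinal distributed mechanism on instances with k symmetric districts of λ agents and m alternatives has distortion at least c·k·m²; that is, the distortion of every deterministic ordinal distributed mechanism is Ω(km²). -/

import Mathlib

/-!
Call the alternatives `0` and `1` stars. An agent whose top alternative is `t ≥ 2` ranks the stars
second and third. A pool `S` of non-star alternatives gives the district profile whose tops run
through `S` in turn, so no alternative is the top of more than `n / #S + 1` agents.

If, for some pool of size at least `q ≈ h / 8`, the in-district rule elects an alternative outside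
the pool, give every district this profile and let each agent value only her top: the winner has
welfare zero. Otherwise the rule is a choice function on large pools. Double counting the pairs
(`V`, element chosen from a subset of `V`) over `(ρ + 1)`-sets `V` then yields a set `R` and `k`
alternatives `y d ∉ R`, each chosen from a pool `S d ⊆ R ∪ {y d}`. District `d` gets the profile of
`S d`. The winner `y d` is then the top of at most `8 s` agents, all of them in district `d`. These
agents value all `m` alternatives equally, and everyone else values her top and the two stars
`1 / 3` each. So a star has welfare about `k n / 3`, while the winner has at most `8 s / m`.
-/

open Finset Equiv

section ChoiceFunction

variable {α : Type*} [DecidableEq α] (φ : Finset α → α) (q : ℕ)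

def chosenIn (V : Finset α) : Finset α := {S ∈ V.powerset | q ≤ #S}.image φ

def newlyChosen (U R : Finset α) : Finset α :=
  {a ∈ U \ R | ∃ S ⊆ insert a R, q ≤ #S ∧ φ S = a}

variable {φ q} {U : Finset α}

lemma chosenIn_mono {V W : Finset α} (h : V ⊆ W) : chosenIn φ q V ⊆ chosenIn φ q W :=
  image_subset_image (filter_subset_filter _ (powerset_mono.mpr h))

lemma mem_chosenIn {V : Finset α} {x : α} :
    x ∈ chosenIn φ q V ↔ ∃ S ⊆ V, q ≤ #S ∧ φ S = x := by
  simp [chosenIn, and_assoc]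

lemma mem_of_mem_chosenIn (hφ : ∀ S ⊆ U, q ≤ #S → φ S ∈ S) {V : Finset α} (hV : V ⊆ U)
    {x : α} (hx : x ∈ chosenIn φ q V) : x ∈ V := by
  obtain ⟨S, hSV, hqS, rfl⟩ := mem_chosenIn.mp hx
  exact hSV (hφ S (hSV.trans hV) hqS)

lemma card_lt_card_chosenIn_add (hφ : ∀ S ⊆ U, q ≤ #S → φ S ∈ S) {V : Finset α} (hV : V ⊆ U)
    (hqV : q ≤ #V) : #V < #(chosenIn φ q V) + q := by
  induction V using Finset.strongInduction with
  | H V ih =>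
  have hφV : φ V ∈ chosenIn φ q V := mem_chosenIn.mpr ⟨V, subset_rfl, hqV, rfl⟩
  rcases hqV.eq_or_lt with hq | hq
  · have := card_pos.mpr ⟨_, hφV⟩
    omega
  have hV' : V.erase (φ V) ⊂ V := erase_ssubset (hφ V hV hqV)
  have hcard : #(V.erase (φ V)) = #V - 1 := card_erase_of_mem (hφ V hV hqV)
  have hsub : chosenIn φ q (V.erase (φ V)) ⊆ (chosenIn φ q V).erase (φ V) := fun x hx =>
    mem_erase.mpr ⟨ne_of_mem_erase (mem_of_mem_chosenIn hφ (hV'.subset.trans hV) hx),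
      chosenIn_mono hV'.subset hx⟩
  have := ih _ hV' (hV'.subset.trans hV) (by omega)
  have := card_le_card hsub
  rw [card_erase_of_mem hφV] at this
  omega

lemma sum_card_chosenIn_le_sum_card_newlyChosen (hφ : ∀ S ⊆ U, q ≤ #S → φ S ∈ S) (ρ : ℕ) :
    ∑ V ∈ U.powersetCard (ρ + 1), #(chosenIn φ q V) ≤
      ∑ R ∈ U.powersetCard ρ, #(newlyChosen φ q U R) := by
  rw [← card_sigma, ← card_sigma]
  refine card_le_card_of_injOn (fun p => ⟨p.1.erase p.2, p.2⟩) (fun p hp => ?_) ?_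
  · obtain ⟨hV, hx⟩ := mem_sigma.mp hp
    obtain ⟨hVU, hVcard⟩ := mem_powersetCard.mp hV
    have hxV := mem_of_mem_chosenIn hφ hVU hx
    obtain ⟨S, hSV, hqS, hSx⟩ := mem_chosenIn.mp hx
    refine mem_sigma.mpr ⟨mem_powersetCard.mpr ⟨(erase_subset _ _).trans hVU, ?_⟩,
      mem_filter.mpr ⟨mem_sdiff.mpr ⟨hVU hxV, notMem_erase _ _⟩, S, ?_, hqS, hSx⟩⟩
    · rw [card_erase_of_mem hxV, hVcard, Nat.add_sub_cancel]
    · rwa [insert_erase hxV]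
  · rintro ⟨V, x⟩ hp ⟨W, y⟩ hp' h
    simp only [Sigma.mk.injEq, heq_eq_eq] at h
    obtain ⟨hVW, rfl⟩ := h
    obtain ⟨hV, hxV⟩ : V ∈ _ ∧ x ∈ chosenIn φ q V := mem_sigma.mp hp
    obtain ⟨hW, hxW⟩ : W ∈ _ ∧ x ∈ chosenIn φ q W := mem_sigma.mp hp'
    replace hxV := mem_of_mem_chosenIn hφ (mem_powersetCard.mp hV).1 hxV
    replace hxW := mem_of_mem_chosenIn hφ (mem_powersetCard.mp hW).1 hxW
    rw [← insert_erase hxV, ← insert_erase hxW, hVW]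

lemma exists_le_card_newlyChosen (hφ : ∀ S ⊆ U, q ≤ #S → φ S ∈ S) {k ρ : ℕ}
    (h : (k - 1) * (ρ + 1) < (#U - ρ) * (ρ + 2 - q)) :
    ∃ R ⊆ U, k ≤ #(newlyChosen φ q U R) := by
  by_contra! hsmall
  have hρU : ρ < #U := by
    by_contra! h'
    simp [Nat.sub_eq_zero_of_le h'] at h
  have hqρ : q ≤ ρ + 1 := by
    by_contra! h'
    simp [show ρ + 2 - q = 0 by omega] at h
  have hchosen : (#U).choose (ρ + 1) * (ρ + 2 - q) ≤
      ∑ V ∈ U.powersetCard (ρ + 1), #(chosenIn φ q V) := by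
    rw [← card_powersetCard, ← smul_eq_mul]
    refine card_nsmul_le_sum _ _ _ fun V hV => ?_
    obtain ⟨hVU, hVcard⟩ := mem_powersetCard.mp hV
    have := card_lt_card_chosenIn_add hφ hVU (by omega)
    omega
  have hnew : ∑ R ∈ U.powersetCard ρ, #(newlyChosen φ q U R) ≤ (#U).choose ρ * (k - 1) := by
    rw [← card_powersetCard, ← smul_eq_mul]
    refine sum_le_card_nsmul _ _ _ fun R hR => ?_
    have := hsmall R (mem_powersetCard.mp hR).1
    omega
  have hcount := (hchosen.trans (sum_card_chosenIn_le_sum_card_newlyChosen hφ ρ)).trans hnew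
  -- multiply by `ρ + 1` and use `C(N, ρ + 1) (ρ + 1) = C(N, ρ) (N - ρ)`
  have := Nat.mul_le_mul_right (ρ + 1) hcount
  rw [mul_right_comm, Nat.choose_succ_right_eq, mul_assoc, mul_assoc] at this
  have := Nat.le_of_mul_le_mul_left this (Nat.choose_pos hρU.le)
  linarith

theorem exists_privately_chosen (hφ : ∀ S ⊆ U, q ≤ #S → φ S ∈ S) {k ρ : ℕ}
    (h : (k - 1) * (ρ + 1) < (#U - ρ) * (ρ + 2 - q)) :
    ∃ y : Fin k → α, ∀ d, ∃ S ⊆ U, q ≤ #S ∧ φ S = y d ∧ ∀ d' ≠ d, y d' ∉ S := by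
  obtain ⟨R, hRU, hk⟩ := exists_le_card_newlyChosen hφ h
  obtain ⟨e⟩ := Function.Embedding.nonempty_of_card_le (α := Fin k)
    (β := newlyChosen φ q U R) (by simpa using hk)
  refine ⟨fun d => e d, fun d => ?_⟩
  obtain ⟨hmem, S, hSR, hqS, hSd⟩ := mem_filter.mp (e d).2
  refine ⟨S, hSR.trans (insert_subset (mem_sdiff.mp hmem).1 hRU), hqS, hSd,
    fun d' hd' hd'S => ?_⟩
  rcases mem_insert.mp (hSR hd'S) with h | h
  · exact hd' (e.injective (Subtype.ext h))
  · exact (mem_sdiff.mp (mem_filter.mp (e d').2).1).2 h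

end ChoiceFunction

section RoundRobin

variable {α : Type*} [Inhabited α] {S : Finset α}

-- `default` is only reached when `S` is empty.
noncomputable def roundRobin (S : Finset α) (i : ℕ) : α := S.toList.getD (i % #S) default

lemma roundRobin_eq_getElem (hS : S.Nonempty) (i : ℕ) :
    roundRobin S i = S.toList[i % #S]'(by simpa using Nat.mod_lt i hS.card_pos) :=
  List.getD_eq_getElem _ _ _

lemma roundRobin_mem (hS : S.Nonempty) (i : ℕ) : roundRobin S i ∈ S := by
  rw [roundRobin_eq_getElem hS, ← mem_toList]
  exact List.getElem_mem _

lemma card_filter_roundRobin_eq_le [DecidableEq α] (hS : S.Nonempty) (n : ℕ) (x : α) :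
    #{i : Fin n | roundRobin S i = x} ≤ n / #S + 1 := by
  rw [← card_range (n / #S + 1)]
  refine card_le_card_of_injOn (fun i => (i : ℕ) / #S)
    (fun i _ => mem_range.mpr (Nat.lt_succ_of_le (Nat.div_le_div_right i.isLt.le))) ?_
  intro i hi j hj hij
  simp only [coe_filter, mem_univ, true_and, Set.mem_ofPred_eq] at hi hj
  rw [← hj, roundRobin_eq_getElem hS, roundRobin_eq_getElem hS,
    S.nodup_toList.getElem_inj_iff] at hi
  replace hij : (i : ℕ) / #S = j / #S := hij
  exact Fin.ext <| calc
    (i : ℕ) = #S * (i / #S) + i % #S := (Nat.div_add_mod _ _).symm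
    _ = #S * (j / #S) + j % #S := by rw [hij, hi]
    _ = j := Nat.div_add_mod _ _

end RoundRobin

section PoolProfile

variable {m : ℕ} {t a : Fin m}

lemma Fin.card_filter_le_val (n j : ℕ) : #{a : Fin n | j ≤ (a : ℕ)} = n - j := by
  have := card_filter_add_card_filter_not (s := univ) fun a : Fin n => (a : ℕ) < j
  simp only [not_lt, card_univ, Fintype.card_fin, Fin.card_filter_val_lt] at this
  omega

lemma Fin.coe_cycleRange_zero_of_two_le [NeZero m] (ht : 2 ≤ (t : ℕ)) :
    (t.cycleRange 0 : ℕ) = 1 :=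
  Fin.coe_cycleRange_of_lt (Fin.lt_def.mpr (by rw [Fin.val_zero]; omega))

lemma Fin.three_le_coe_cycleRange (ht : 2 ≤ (t : ℕ)) (ha : 2 ≤ (a : ℕ)) (hat : a ≠ t) :
    3 ≤ (t.cycleRange a : ℕ) := by
  rcases lt_or_gt_of_ne hat with h | h
  · rw [Fin.coe_cycleRange_of_lt h]; omega
  · rw [Fin.cycleRange_of_gt h]; exact (Fin.lt_def.mp h).trans_le' ht

/-- `Fin.cycleRange t` is the cycle `(0 1 … t)`: as a ranking it puts `t` first and the stars
`0`, `1` second and third. -/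
noncomputable def poolProfile (n : ℕ) [NeZero m] (S : Finset (Fin m)) : Fin n → Perm (Fin m) :=
  fun i => (roundRobin S i).cycleRange

lemma poolProfile_apply_ne_zero [NeZero m] {n : ℕ} {S : Finset (Fin m)} (hS : S.Nonempty)
    (ha : a ∉ S) (i : Fin n) : poolProfile n S i a ≠ 0 := by
  rw [poolProfile, ← Fin.cycleRange_self (roundRobin S i)]
  exact (Fin.cycleRange _).injective.ne (ne_of_mem_of_not_mem (roundRobin_mem hS i) ha).symm

end PoolProfile

section Distortion

variable {k n m : ℕ}

noncomputable def topUniform (σ : Perm (Fin m)) (r : ℕ) (a : Fin m) : ℝ :=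
  if (σ a : ℕ) < r then (r : ℝ)⁻¹ else 0

lemma topUniform_nonneg (σ : Perm (Fin m)) (r : ℕ) (a : Fin m) : 0 ≤ topUniform σ r a := by
  unfold topUniform; split_ifs <;> positivity

lemma sum_topUniform (σ : Perm (Fin m)) {r : ℕ} (hr : r ≠ 0) (hrm : r ≤ m) :
    ∑ a, topUniform σ r a = 1 := by
  unfold topUniform
  rw [Equiv.sum_comp σ fun b : Fin m => if (b : ℕ) < r then (r : ℝ)⁻¹ else 0, sum_ite,
    sum_const_zero, add_zero, sum_const, Fin.card_filter_val_lt, min_eq_right hrm,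
    nsmul_eq_mul, mul_inv_cancel₀ (Nat.cast_ne_zero.mpr hr)]

lemma topUniform_le_of_lt (σ : Perm (Fin m)) (r : ℕ) {a b : Fin m} (h : σ a < σ b) :
    topUniform σ r b ≤ topUniform σ r a := by
  have := Fin.lt_def.mp h
  unfold topUniform
  split_ifs <;> first | rfl | positivity | omega

def welfare (v : Fin k → Fin n → Fin m → ℝ) (a : Fin m) : ℝ := ∑ d, ∑ i, v d i a

def DistortionAtLeast (B : ℝ) (fin : (Fin n → Perm (Fin m)) → Fin m)
    (fover : (Fin k → Fin m) → Fin m) : Prop :=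
  ∃ (σ : Fin k → Fin n → Perm (Fin m)) (v : Fin k → Fin n → Fin m → ℝ),
    (∀ d i a, 0 ≤ v d i a) ∧ (∀ d i, ∑ a, v d i a = 1) ∧
    (∀ d i a b, σ d i a < σ d i b → v d i b ≤ v d i a) ∧
    ∃ a, (∀ b, welfare v b ≤ welfare v a) ∧ B * welfare v (fover fun d => fin (σ d)) ≤ welfare v a

variable {B : ℝ} {fin : (Fin n → Perm (Fin m)) → Fin m} {fover : (Fin k → Fin m) → Fin m}

lemma distortionAtLeast_of_topUniform (σ : Fin k → Fin n → Perm (Fin m))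
    (r : Fin k → Fin n → ℕ) (hr : ∀ d i, r d i ≠ 0) (hrm : ∀ d i, r d i ≤ m) (b : Fin m)
    (hb : B * welfare (fun d i => topUniform (σ d i) (r d i)) (fover fun d => fin (σ d)) ≤
      welfare (fun d i => topUniform (σ d i) (r d i)) b) :
    DistortionAtLeast B fin fover := by
  have : Nonempty (Fin m) := ⟨b⟩
  obtain ⟨a, ha⟩ := Finite.exists_max (welfare fun d i => topUniform (σ d i) (r d i))
  exact ⟨σ, _, fun d i => topUniform_nonneg _ _, fun d i => sum_topUniform _ (hr d i) (hrm d i),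
    fun d i _ _ => topUniform_le_of_lt _ _, a, ha, hb.trans (ha b)⟩

lemma distortionAtLeast_of_rep_not_top [NeZero m] (hfover : ∀ reps, ∃ d, fover reps = reps d)
    (P : Fin n → Perm (Fin m)) (hP : ∀ i, P i (fin P) ≠ 0) : DistortionAtLeast B fin fover := by
  refine distortionAtLeast_of_topUniform (fun _ => P) (fun _ _ => 1) (fun _ _ => one_ne_zero)
    (fun _ _ => NeZero.one_le) (fin P) ?_
  obtain ⟨d, hd⟩ := hfover fun _ => fin P
  have hzero : welfare (fun (_ : Fin k) i => topUniform (P i) 1) (fin P) = 0 :=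
    sum_eq_zero fun _ _ => sum_eq_zero fun i _ =>
      if_neg fun h => hP i (Fin.ext (by rw [Fin.val_zero]; exact Nat.lt_one_iff.mp h))
  rw [hd, hzero, mul_zero]

lemma distortionAtLeast_of_private_tops [NeZero m] (hB : 0 ≤ B)
    (hfover : ∀ reps, ∃ d, fover reps = reps d) (t : Fin k → Fin n → Fin m) (y : Fin k → Fin m)
    {X : ℕ} (ht : ∀ d i, 2 ≤ (t d i : ℕ)) (hy : ∀ d, 2 ≤ (y d : ℕ))
    (hrep : ∀ d, fin (fun i => (t d i).cycleRange) = y d)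
    (hpriv : ∀ d d' i, d' ≠ d → t d i ≠ y d') (hX : ∀ d, #{i | t d i = y d} ≤ X)
    (hBX : B * (X / m) ≤ (k * n - X) / 3) : DistortionAtLeast B fin fover := by
  obtain ⟨ds, hds⟩ := hfover fun d => fin fun i => (t d i).cycleRange
  set w := y ds
  set r : Fin k → Fin n → ℕ := fun d i => if t d i = w then m else 3
  refine distortionAtLeast_of_topUniform (fun d i => (t d i).cycleRange) r
    (fun d i => by dsimp only [r]; split_ifs <;> omega)
    (fun d i => by have := ht d i; have := (t d i).isLt; dsimp only [r]; split_ifs <;> omega) 0 ?_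
  rw [hds, hrep]
  set v : Fin k → Fin n → Fin m → ℝ := fun d i => topUniform (t d i).cycleRange (r d i)
  set N := #{i | t ds i = w}
  have hcount (x : ℝ) : ∑ d, ∑ i, (if t d i = w then x else 0) = N * x := by
    rw [sum_eq_single ds (fun d _ hd => sum_eq_zero fun i _ => if_neg (hpriv d ds i hd.symm))
      (by simp), ← sum_filter, sum_const, nsmul_eq_mul]
  have hwinner : welfare v w ≤ N / m := by
    calc welfare v w ≤ ∑ d, ∑ i, (if t d i = w then (m : ℝ)⁻¹ else 0) := by
          refine sum_le_sum fun d _ => sum_le_sum fun i _ => ?_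
          by_cases h : t d i = w
          · simp only [v, r, topUniform, if_pos h]
            split_ifs <;> simp
          · simp only [v, r, topUniform, if_neg h]
            rw [if_neg (Fin.three_le_coe_cycleRange (ht d i) (hy ds) (Ne.symm h)).not_gt]
      _ = N / m := by rw [hcount, div_eq_mul_inv]
  have hstar : (k * n - N) / 3 ≤ welfare v 0 := by
    calc (k * n - N) / 3 = ∑ d, ∑ i, ((3 : ℝ)⁻¹ - if t d i = w then (3 : ℝ)⁻¹ else 0) := by
          simp only [sum_sub_distrib, hcount, sum_const, card_univ, Fintype.card_fin,
            nsmul_eq_mul]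
          ring
      _ ≤ welfare v 0 := by
          refine sum_le_sum fun d _ => sum_le_sum fun i _ => ?_
          by_cases h : t d i = w
          · rw [if_pos h, sub_self]
            exact topUniform_nonneg _ _ _
          · simp only [v, r, topUniform, if_neg h, Fin.coe_cycleRange_zero_of_two_le (ht d i)]
            norm_num
  have hNX : (N : ℝ) ≤ X := by exact_mod_cast hX ds
  calc B * welfare v w ≤ B * (X / m) := by
        gcongr
        exact hwinner.trans (by gcongr)
    _ ≤ (k * n - X) / 3 := hBX
    _ ≤ (k * n - N) / 3 := by gcongr
    _ ≤ welfare v 0 := hstar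

end Distortion

lemma pool_counting_inequality {k h : ℕ} (hkh : k ≤ h) (hh : 10 ≤ h) :
    (k - 1) * (h / 2 + 1) < (2 * h - 2 - h / 2) * (h / 2 + 2 - (h / 8 + 1)) := by
  obtain ⟨a, b, ha, hb, hab, ha5⟩ : ∃ a b, a = h / 2 ∧ b = h / 8 ∧ 4 * b ≤ a ∧ 5 ≤ a :=
    ⟨_, _, rfl, rfl, by omega, by omega⟩
  rw [← ha, ← hb]
  calc (k - 1) * (a + 1) ≤ 2 * a * (a + 1) := Nat.mul_le_mul_right _ (by omega)
    _ < (3 * a - 2) * (a + 1 - b) := by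
      have : 3 * a + 4 ≤ 4 * (a + 1 - b) := by omega
      zify [show 2 ≤ 3 * a by omega, show b ≤ a + 1 by omega] at this ⊢
      nlinarith
    _ ≤ (2 * h - 2 - a) * (a + 2 - (b + 1)) := Nat.mul_le_mul (by omega) (by omega)

lemma mul_div_eighth_add_one_le {h s : ℕ} (hs : 1 ≤ s) : h * s / (h / 8 + 1) + 1 ≤ 8 * s := by
  have : h * s < 8 * s * (h / 8 + 1) := by
    have : h < 8 * (h / 8 + 1) := by omega
    nlinarith
  have := (Nat.div_lt_iff_lt_mul (by omega)).mpr this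
  omega

lemma hundredth_mul_le {k h s : ℝ} (hk : 2 ≤ k) (hh : 8 ≤ h) (hs : 0 ≤ s) :
    1 / 100 * k * (2 * h) ^ 2 * (8 * s / (2 * h)) ≤ (k * (h * s) - 8 * s) / 3 := by
  have : 1 / 100 * k * (2 * h) ^ 2 * (8 * s / (2 * h)) = 4 / 25 * (k * h) * s := by
    field_simp; ring
  rw [this]
  nlinarith [mul_le_mul hk hh (by norm_num) (by linarith)]

theorem stmt3 :
    ∃ c : ℝ, 0 < c ∧ ∃ m0 : ℕ, ∀ k h s : ℕ,
      2 ≤ k → k ≤ h → 1 ≤ s → m0 ≤ 2 * h →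
      ∀ (fin : (Fin (h * s) → (Fin (2 * h) ≃ Fin (2 * h))) → Fin (2 * h))
        (fover : (Fin k → Fin (2 * h)) → Fin (2 * h)),
        (∀ reps, ∃ d, fover reps = reps d) →
        ∃ (σ : Fin k → Fin (h * s) → (Fin (2 * h) ≃ Fin (2 * h)))
          (v : Fin k → Fin (h * s) → Fin (2 * h) → ℝ),
          (∀ d i a, 0 ≤ v d i a) ∧ (∀ d i, ∑ a, v d i a = 1) ∧
          (∀ d i a b, σ d i a < σ d i b → v d i b ≤ v d i a) ∧
          ∃ a, (∀ b, (∑ d, ∑ i, v d i b) ≤ (∑ d, ∑ i, v d i a)) ∧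
            c * k * (2 * (h : ℝ)) ^ 2 *
                (∑ d, ∑ i, v d i (fover fun d' => fin (σ d'))) ≤
              (∑ d, ∑ i, v d i a) := by
  refine ⟨1 / 100, by norm_num, 20, fun k h s hk hkh hs hh fin fover hfover => ?_⟩
  have : NeZero (2 * h) := ⟨by omega⟩
  set U : Finset (Fin (2 * h)) := {a | 2 ≤ (a : ℕ)}
  set q := h / 8 + 1
  suffices DistortionAtLeast (1 / 100 * k * (2 * (h : ℝ)) ^ 2) fin fover from this
  by_cases hA : ∃ S ⊆ U, q ≤ #S ∧ fin (poolProfile _ S) ∉ S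
  · obtain ⟨S, -, hqS, hS⟩ := hA
    exact distortionAtLeast_of_rep_not_top hfover _
      (poolProfile_apply_ne_zero (card_pos.mp (by omega)) hS)
  push Not at hA
  obtain ⟨y, hy⟩ := exists_privately_chosen hA (ρ := h / 2) (k := k)
    (by rw [Fin.card_filter_le_val]; exact pool_counting_inequality hkh (by omega))
  choose S hSU hqS hSy hpriv using hy
  have hSne (d : Fin k) : (S d).Nonempty := card_pos.mp (by have := hqS d; omega)
  have hU {a} (ha : a ∈ U) : 2 ≤ (a : ℕ) := (mem_filter.mp ha).2
  refine distortionAtLeast_of_private_tops (by positivity) hfover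
    (fun d i => roundRobin (S d) i) y (X := 8 * s)
    (fun d i => hU (hSU d (roundRobin_mem (hSne d) i)))
    (fun d => hU (hSU d (hSy d ▸ hA _ (hSU d) (hqS d))))
    hSy (fun d d' i hd h => hpriv d d' hd (h ▸ roundRobin_mem (hSne d) i))
    (fun d => (card_filter_roundRobin_eq_le (hSne d) _ _).trans
      (le_trans (by gcongr; exact hqS d) (mul_div_eighth_add_one_le hs))) ?_
  push_cast
  exact hundredth_mul_le (by exact_mod_cast hk) (by norm_cast; omega) (by positivity)
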